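/- arXiv:1308.0856 — 3 statements merged into one kernel-verified Lean document; each statement's English description precedes it below -/
import Mathlib

section
/- Let G be a group and H a subgroup. The H-fixed point functor (−)^H : Set^G → Set preserves pushouts of spans X ← A → Y of G-sets in which the map A → X is injective. -/
/-!
Pushouts of `G`-sets are computed on underlying sets, and along an injection `A → X` the
pushout `Z` is explicit: `Y → Z` is injective, the square is a pullback, `X → Z` and `Y → Z` are
jointly surjective, and `X → Z` is injective off the image of `A`. In `Set` these four properties
characterise pushout squares along an injection, and each of them descends to `H`-fixed points,
because a point sent to a fixed point by an equivariant map that is injective on a `G`-stable set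
containing it is itself fixed.
-/

open CategoryTheory CategoryTheory.Limits

/-- The `H`-fixed point functor `Set^G → Set` on `G`-sets. -/
def fixedPointsFunctor (G : Type) [Group G] (H : Subgroup G) :
    Action (Type) (MonCat.of G) ⥤ Type where
  obj X := { x : X.V // ∀ h ∈ H, X.ρ h x = x }
  map {X Y} f := TypeCat.ofHom fun x => ⟨f.hom x.1, fun h hh => by
    have := congrArg (fun k => k x.1) (f.comm h)
    simp only [types_comp_apply] at this
    rw [← this, x.2 h hh]⟩

universe u

namespace CategoryTheory.Limits.Types

variable {X₁ X₂ X₃ X₄ : Type u} {t : X₁ ⟶ X₂} {l : X₁ ⟶ X₃} {r : X₂ ⟶ X₄} {b : X₃ ⟶ X₄}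

lemma injOn_compl_range_of_isPushout (h : IsPushout t l r b) :
    Set.InjOn r (Set.range t)ᶜ := by
  classical
  intro x hx y hy hxy
  -- `φ` collapses `range t` and is injective elsewhere; with the constant map `none` it descends
  -- along the pushout.
  let φ : X₂ ⟶ Option X₂ := TypeCat.ofHom fun z => if z ∈ Set.range t then none else some z
  have w : t ≫ φ = l ≫ TypeCat.ofHom (fun _ => none) := by
    ext a
    simp [φ]
  have := congrArg (h.desc φ _ w) hxy
  rw [← types_comp_apply r, ← types_comp_apply r, h.inl_desc] at this
  change (if x ∈ Set.range t then none else some x) =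
    (if y ∈ Set.range t then none else some y) at this
  rwa [if_neg hx, if_neg hy, Option.some_inj] at this

end CategoryTheory.Limits.Types

namespace Action

variable {G : Type} [Group G] {X Y : Action (Type) (MonCat.of G)}

lemma Hom.hom_ρ_apply (φ : X ⟶ Y) (g : G) (x : X.V) : φ.hom (X.ρ g x) = Y.ρ g (φ.hom x) :=
  types_congr_hom (φ.comm g) x

lemma ρ_apply_mem_range_iff (φ : Y ⟶ X) (g : G) (x : X.V) :
    X.ρ g x ∈ Set.range φ.hom ↔ x ∈ Set.range φ.hom := by
  constructor
  · rintro ⟨y, hy⟩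
    refine ⟨Y.ρ g⁻¹ y, ?_⟩
    rw [Hom.hom_ρ_apply, hy, ρ_inv_self_apply]
  · rintro ⟨y, rfl⟩
    exact ⟨Y.ρ g y, Hom.hom_ρ_apply φ g y⟩

end Action

section FixedPoints

variable {G : Type} [Group G] (H : Subgroup G)
variable {A X Y Z : Action (Type) (MonCat.of G)}

lemma mem_range_fixedPointsFunctor_map_of_injOn {φ : X ⟶ Y} {S : Set X.V}
    (hφ : Set.InjOn φ.hom S) (hS : ∀ (k : G), ∀ x ∈ S, X.ρ k x ∈ S)
    {y : (fixedPointsFunctor G H).obj Y} {x : X.V} (hx : x ∈ S) (hxy : φ.hom x = y.1) :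
    y ∈ Set.range ((fixedPointsFunctor G H).map φ) :=
  ⟨⟨x, fun k hk => hφ (hS k x hx) hx (by rw [Action.Hom.hom_ρ_apply, hxy]; exact y.2 k hk)⟩,
    Subtype.ext hxy⟩

lemma mem_range_fixedPointsFunctor_map {φ : X ⟶ Y} (hφ : Function.Injective φ.hom)
    {y : (fixedPointsFunctor G H).obj Y} (hy : y.1 ∈ Set.range φ.hom) :
    y ∈ Set.range ((fixedPointsFunctor G H).map φ) :=
  let ⟨_, hx⟩ := hy
  mem_range_fixedPointsFunctor_map_of_injOn H (Set.injOn_univ.2 hφ) (fun _ _ _ => trivial)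
    trivial hx

lemma fixedPointsFunctor_map_injective {φ : X ⟶ Y} (hφ : Function.Injective φ.hom) :
    Function.Injective ((fixedPointsFunctor G H).map φ) :=
  fun _ _ hxy => Subtype.ext (hφ (congrArg Subtype.val hxy))

lemma isPullback_fixedPointsFunctor_map {f : A ⟶ X} {g : A ⟶ Y} {i : X ⟶ Z} {j : Y ⟶ Z}
    (h : IsPullback f.hom g.hom i.hom j.hom) :
    IsPullback ((fixedPointsFunctor G H).map f) ((fixedPointsFunctor G H).map g)
      ((fixedPointsFunctor G H).map i) ((fixedPointsFunctor G H).map j) := by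
  have w : f ≫ i = g ≫ j := Action.Hom.ext h.w
  rw [Types.isPullback_iff]
  refine ⟨by rw [← Functor.map_comp, ← Functor.map_comp, w], ?_, ?_⟩
  · rintro a a' ⟨hf, hg⟩
    exact Subtype.ext
      (Types.ext_of_isPullback h (congrArg Subtype.val hf) (congrArg Subtype.val hg))
  · intro x y hxy
    obtain ⟨a, hfa, hga⟩ := Types.exists_of_isPullback h x.1 y.1 (congrArg Subtype.val hxy)
    refine ⟨⟨a, fun k hk => Types.ext_of_isPullback h ?_ ?_⟩,
      Subtype.ext hfa, Subtype.ext hga⟩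
    · rw [Action.Hom.hom_ρ_apply, hfa]; exact x.2 k hk
    · rw [Action.Hom.hom_ρ_apply, hga]; exact y.2 k hk

lemma isPushout_fixedPointsFunctor_map {f : A ⟶ X} {g : A ⟶ Y} {i : X ⟶ Z} {j : Y ⟶ Z}
    (h : IsPushout f g i j) (hf : Function.Injective f.hom) :
    IsPushout ((fixedPointsFunctor G H).map f) ((fixedPointsFunctor G H).map g)
      ((fixedPointsFunctor G H).map i) ((fixedPointsFunctor G H).map j) := by
  have hV : IsPushout f.hom g.hom i.hom j.hom := h.map (Action.forget _ _)
  have hj : Function.Injective j.hom :=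
    Types.pushoutCocone_inr_injective_of_isColimit hV.isColimit hf
  have hi : Set.InjOn i.hom (Set.range f.hom)ᶜ := Types.injOn_compl_range_of_isPushout hV
  have hS : ∀ (k : G), ∀ x ∈ (Set.range f.hom)ᶜ, X.ρ k x ∈ (Set.range f.hom)ᶜ :=
    fun k x hx => by rwa [Set.mem_compl_iff, Action.ρ_apply_mem_range_iff]
  have : Mono ((fixedPointsFunctor G H).map j) :=
    (mono_iff_injective _).2 (fixedPointsFunctor_map_injective H hj)
  refine (Types.isPushout_of_isPullback_of_mono'
    (isPullback_fixedPointsFunctor_map H (Types.isPullback_of_isPushout hV hf)).flip ?_ ?_).flip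
  · refine Set.eq_univ_of_forall fun z => ?_
    rcases Types.eq_or_eq_of_isPushout' hV.flip z.1 with ⟨y, hy⟩ | ⟨x, hx, hxf⟩
    · exact Or.inl (mem_range_fixedPointsFunctor_map H hj ⟨y, hy⟩)
    · exact Or.inr (mem_range_fixedPointsFunctor_map_of_injOn H hi hS hxf hx)
  · intro x y hx hy hxy
    have hx' : x.1 ∉ Set.range f.hom := fun h => hx (mem_range_fixedPointsFunctor_map H hf h)
    have hy' : y.1 ∉ Set.range f.hom := fun h => hy (mem_range_fixedPointsFunctor_map H hf h)
    exact Subtype.ext (hi hx' hy' (congrArg Subtype.val hxy))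

end FixedPoints

/-- The `H`-fixed point functor `Set^G → Set` preserves pushouts of spans
`X ← A → Y` of `G`-sets in which `A → X` is injective. -/
theorem stmt6 (G : Type) [Group G] (H : Subgroup G)
    (A X Y : Action (Type) (MonCat.of G)) (f : A ⟶ X) (g : A ⟶ Y)
    (hinj : Function.Injective f.hom) :
    Nonempty (PreservesColimit (span f g) (fixedPointsFunctor G H)) :=
  ⟨(IsPushout.of_hasPushout f g).preservesColimit_span_iff.2
    (isPushout_fixedPointsFunctor_map H (IsPushout.of_hasPushout f g) hinj)⟩
end

section
/- Let G be a group and H a subgroup. For any group A, the canonical map from the free product (coproduct in Groups) ∐_{(G/K)^H} A to the H-fixed subgroup of ∐_{G/K} A (with G permuting the free factors via its action on G/K) is an isomorphism. -/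
variable (A : Type*) [Group A] (G : Type*) [Group G] (H K : Subgroup G)

/-- The action of `g : G` on the free product `∐_{G/K} A`, permuting the free factors
via left translation on `G/K`. -/
def permHom (g : G) :
    Monoid.CoprodI (fun (_ : G ⧸ K) => A) →* Monoid.CoprodI (fun (_ : G ⧸ K) => A) :=
  Monoid.CoprodI.lift fun c => Monoid.CoprodI.of (M := fun (_ : G ⧸ K) => A) (i := g • c)

/-- The `H`-fixed subgroup of the free product `∐_{G/K} A`. -/
def fixedSubgroup : Subgroup (Monoid.CoprodI (fun (_ : G ⧸ K) => A)) where
  carrier := { x | ∀ h : H, permHom A G K (h : G) x = x }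
  mul_mem' := fun ha hb h => by rw [map_mul, ha h, hb h]
  one_mem' := fun h => map_one _
  inv_mem' := fun ha h => by rw [map_inv, ha h]

/-- The canonical homomorphism `∐_{(G/K)^H} A → (∐_{G/K} A)^H`. -/
def toFixed :
    Monoid.CoprodI (fun (_ : MulAction.fixedPoints H (G ⧸ K)) => A) →*
      fixedSubgroup A G H K :=
  Monoid.CoprodI.lift fun c =>
    MonoidHom.codRestrict
      (Monoid.CoprodI.of (M := fun (_ : G ⧸ K) => A) (i := (c : G ⧸ K)))
      (fixedSubgroup A G H K) (fun a h => by
      show permHom A G K (h : G)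
          (Monoid.CoprodI.of (M := fun (_ : G ⧸ K) => A) (i := (c : G ⧸ K)) a) =
        Monoid.CoprodI.of (M := fun (_ : G ⧸ K) => A) (i := (c : G ⧸ K)) a
      rw [permHom, Monoid.CoprodI.lift_of]
      have hc : (h : G) • (c : G ⧸ K) = (c : G ⧸ K) := c.2 h
      rw [hc])

/-!
Relabelling the free factors along an injection `f : κ → ι` sends reduced words to reduced
words, letter by letter. Hence the induced map `∐_κ A → ∐_ι A` is injective, an element fixed by
a relabelling `σ` has every letter of its reduced word at a `σ`-fixed index, and an element all of
whose letters sit at indices in `range f` lies in the image. For `f` the inclusion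
`(G/K)^H ⊆ G/K` and `σ` the translations by `h ∈ H`, this is injectivity and surjectivity.
-/

namespace Monoid.CoprodI

variable {ι κ M : Type*} [Monoid M]

def mapIndex (f : κ → ι) : CoprodI (fun _ : κ => M) →* CoprodI (fun _ : ι => M) :=
  lift fun k => of (M := fun _ : ι => M) (i := f k)

@[simp]
theorem mapIndex_of (f : κ → ι) (k : κ) (m : M) :
    mapIndex f (of (M := fun _ : κ => M) (i := k) m) = of (M := fun _ : ι => M) (i := f k) m :=
  lift_of _ _

namespace Word

variable {f : κ → ι} (hf : Function.Injective f)

def mapIndex (w : Word (fun _ : κ => M)) : Word (fun _ : ι => M) where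
  toList := w.toList.map (Sigma.map f fun _ => id)
  ne_one := by
    simp only [List.mem_map]
    rintro _ ⟨l, hl, rfl⟩
    exact w.ne_one l hl
  chain_ne := List.isChain_map_of_isChain _ (fun _ _ hne heq => hne (hf heq)) w.chain_ne

theorem prod_mapIndex (w : Word (fun _ : κ => M)) :
    (w.mapIndex hf).prod = CoprodI.mapIndex f w.prod := by
  simp only [prod, mapIndex, map_list_prod, List.map_map, Function.comp_def, mapIndex_of,
    Sigma.map, id]

theorem mapIndex_injective : Function.Injective (mapIndex (M := M) hf) := fun _ _ hvw =>
  Word.ext <| List.map_injective_iff.2 (hf.sigma_map fun _ => Function.injective_id)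
    (congrArg toList hvw)

end Word

variable [DecidableEq ι] [DecidableEq M]

theorem Word.prod_equiv (x : CoprodI (fun _ : ι => M)) : (Word.equiv x).prod = x :=
  Word.equiv.symm_apply_apply x

theorem equiv_mapIndex [DecidableEq κ] {f : κ → ι} (hf : Function.Injective f)
    (x : CoprodI (fun _ : κ => M)) :
    Word.equiv (mapIndex f x) = (Word.equiv x).mapIndex hf :=
  Word.equiv.symm.injective <| by
    rw [Equiv.symm_apply_apply]
    exact (congrArg _ (Word.prod_equiv x).symm).trans (Word.prod_mapIndex hf _).symm

theorem mapIndex_injective [DecidableEq κ] {f : κ → ι} (hf : Function.Injective f) :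
    Function.Injective (mapIndex (M := M) f) := fun x y hxy =>
  Word.equiv.injective <| Word.mapIndex_injective hf <| by
    rw [← equiv_mapIndex, ← equiv_mapIndex, hxy]

theorem fst_eq_of_mapIndex_eq_self {σ : ι → ι} (hσ : Function.Injective σ)
    {x : CoprodI (fun _ : ι => M)} (hx : mapIndex σ x = x) :
    ∀ l ∈ (Word.equiv x).toList, σ l.1 = l.1 := by
  have hword := equiv_mapIndex hσ x
  rw [hx] at hword
  have hlist : (Word.equiv x).toList.map (Sigma.map σ fun _ => id) =
      (Word.equiv x).toList.map id := by
    rw [List.map_id]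
    exact (congrArg Word.toList hword).symm
  exact fun l hl => congrArg Sigma.fst (List.map_eq_map_iff.1 hlist l hl)

theorem mem_mrange_mapIndex_of_forall_fst_mem {f : κ → ι} {x : CoprodI (fun _ : ι => M)}
    (hx : ∀ l ∈ (Word.equiv x).toList, l.1 ∈ Set.range f) :
    x ∈ MonoidHom.mrange (mapIndex f) := by
  rw [← Word.prod_equiv x, Word.prod]
  refine Submonoid.list_prod_mem _ fun y hy => ?_
  obtain ⟨l, hl, rfl⟩ := List.mem_map.1 hy
  obtain ⟨k, hk⟩ := hx l hl
  exact ⟨of (M := fun _ : κ => M) (i := k) l.2, by rw [mapIndex_of, hk]⟩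

end Monoid.CoprodI

open Monoid.CoprodI

theorem fixedSubgroup_subtype_comp_toFixed :
    (fixedSubgroup A G H K).subtype.comp (toFixed A G H K) = mapIndex Subtype.val :=
  ext_hom _ _ fun _ => rfl

/-- The canonical map `∐_{(G/K)^H} A → (∐_{G/K} A)^H` is an isomorphism. -/
theorem stmt10 : Function.Bijective (toFixed A G H K) := by
  classical
  have hval := fixedSubgroup_subtype_comp_toFixed A G H K
  refine ⟨fun x y hxy => mapIndex_injective Subtype.val_injective ?_, ?_⟩
  · rw [← hval, MonoidHom.comp_apply, MonoidHom.comp_apply, hxy]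
  · rintro ⟨x, hx⟩
    have hfixed : ∀ l ∈ (Word.equiv x).toList, l.1 ∈ Set.range
        (Subtype.val : MulAction.fixedPoints H (G ⧸ K) → G ⧸ K) := fun l hl =>
      ⟨⟨l.1, fun h => fst_eq_of_mapIndex_eq_self (MulAction.injective (h : G)) (hx h) l hl⟩, rfl⟩
    obtain ⟨y, rfl⟩ := mem_mrange_mapIndex_of_forall_fst_mem hfixed
    exact ⟨y, Subtype.ext (DFunLike.congr_fun hval y)⟩
end

section
/- Let G be a group, F a set of subgroups of G containing the trivial subgroup, and C a complete and cocomplete category. Let i : G → O_F^op be the functor sending the unique object to G/{e} and a group element g to the G-map G/{e} → G/{e}, h ↦ hg. Then the precomposition functor i* : C^{O_F^op} → C^G has a right adjoint i_* given by i_*X(G/H) = X^H, and this right adjoint is fully faithful (equivalently, the counit i* i_* → Id is a natural isomorphism). -/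
open CategoryTheory CategoryTheory.Limits

universe u v

variable (G : Type u) [Group G] (F : Set (Subgroup G))

/-- The orbit category `O_F`: objects are the subgroups `H ∈ F` (standing for the coset
`G`-sets `G/H`), morphisms `G/H → G/K` are the `G`-equivariant maps. -/
structure OrbitCat where
  H : Subgroup G
  mem : H ∈ F

instance : Category.{u} (OrbitCat G F) where
  Hom H K := G ⧸ H.H →[G] G ⧸ K.H
  id H := MulActionHom.id G
  comp f g := g.comp f
  id_comp f := rfl
  comp_id f := rfl
  assoc f g h := rfl

variable (C : Type v) [Category.{u} C] [HasLimits C] [HasColimits C]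

/-- The `H`-fixed point functor `C^G → C`. -/
noncomputable def fixPt (H : Subgroup G) : (SingleObj G ⥤ C) ⥤ C :=
  haveI : HasLimitsOfSize.{u, 0} C := hasLimitsOfSizeShrink.{u, 0, 0, u} C
  (Functor.whiskeringLeft (SingleObj ↥H) (SingleObj G) C).obj
    ((SingleObj.mapHom ↥H G) H.subtype) ⋙ Limits.lim

variable (hF : ⊥ ∈ F)

/-- Right multiplication by `g` as a `G`-map `G/{e} → G/{e}`. -/
def orbRightMul (g : G) : G ⧸ (⊥ : Subgroup G) →[G] G ⧸ (⊥ : Subgroup G) where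
  toFun c := c * ((g : G) : G ⧸ (⊥ : Subgroup G))
  map_smul' m x := by
    induction x using QuotientGroup.induction_on with
    | H z => show (((m * z) * g : G) : G ⧸ (⊥ : Subgroup G)) = ((m * (z * g) : G) : _)
             rw [mul_assoc]

/-- The functor `i : G → O_F^op` sending the unique object to `G/{e}` and `g : G` to the
`G`-map `G/{e} → G/{e}`, `h ↦ hg`. -/
def iFunctor : SingleObj G ⥤ (OrbitCat G F)ᵒᵖ where
  obj _ := Opposite.op ⟨⊥, hF⟩
  map {_ _} (g : G) := Quiver.Hom.op
    (show ((⟨⊥, hF⟩ : OrbitCat G F) ⟶ ⟨⊥, hF⟩) from orbRightMul G g)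
  map_id _ := by
    apply congrArg Quiver.Hom.op
    apply MulActionHom.ext
    intro x
    induction x using QuotientGroup.induction_on with
    | H z => show ((z * 1 : G) : G ⧸ (⊥ : Subgroup G)) = _
             rw [mul_one]
             rfl
  map_comp {_ _ _} f h := by
    apply congrArg Quiver.Hom.op
    apply MulActionHom.ext
    intro x
    induction x using QuotientGroup.induction_on with
    | H z => show ((z * (h * f) : G) : G ⧸ (⊥ : Subgroup G)) = ((z * h * f : G) : _)
             rw [mul_assoc]

/-!
The functor `i` is fully faithful, since every `G`-map `G/e → G/K` is determined by the image of
`e`, hence is right multiplication by some `a` followed by the projection `G/e → G/K`. So the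
pointwise right Kan extension `i_*` along `i` (which exists as `C` is complete) has invertible
counit, which makes `i_*` fully faithful. Its value at `G/H` is the limit of `X` over the comma
category `G/H ↓ i`, and by the same description of `G`-maps that category is equivalent to the
one-object category of `H`; a limit over the latter is the fixed-point object `X^H`.
-/

lemma QuotientGroup.mulActionHom_ext {G X : Type*} [Group G] [MulAction G X] {H : Subgroup G}
    {f g : G ⧸ H →[G] X} (h : f (1 : G) = g (1 : G)) : f = g := by
  ext x
  induction x using QuotientGroup.induction_on with
  | H z =>
    have hz : (z : G ⧸ H) = z • ((1 : G) : G ⧸ H) := by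
      rw [MulAction.Quotient.smul_coe, smul_eq_mul, mul_one]
    rw [hz, map_smul, map_smul, h]

lemma QuotientGroup.mk_bot_injective {G : Type*} [Group G] :
    Function.Injective (QuotientGroup.mk : G → G ⧸ (⊥ : Subgroup G)) := by
  intro a b h
  simpa [QuotientGroup.eq, inv_mul_eq_one] using h

def MulActionHom.quotientMapOfLE {G : Type*} [Group G] {H K : Subgroup G} (h : H ≤ K) :
    G ⧸ H →[G] G ⧸ K where
  toFun := Subgroup.quotientMapOfLE h
  map_smul' m x := by
    induction x using QuotientGroup.induction_on with
    | H z => rfl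

lemma orbRightMul_apply_one (g : G) : orbRightMul G g (1 : G) = g := by
  show ((1 * g : G) : G ⧸ (⊥ : Subgroup G)) = g
  rw [one_mul]

instance : (iFunctor G F hF).Faithful where
  map_injective {_ _} g g' h := by
    have h' : orbRightMul G g = orbRightMul G g' := congrArg Quiver.Hom.unop h
    have h1 := DFunLike.congr_fun h' ((1 : G) : G ⧸ (⊥ : Subgroup G))
    rw [orbRightMul_apply_one, orbRightMul_apply_one] at h1
    exact QuotientGroup.mk_bot_injective h1

instance : (iFunctor G F hF).Full where
  map_surjective {_ _} f := by
    let φ : G ⧸ (⊥ : Subgroup G) →[G] G ⧸ (⊥ : Subgroup G) := f.unop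
    obtain ⟨a, ha⟩ := QuotientGroup.mk_surjective (φ (1 : G))
    refine ⟨a, Quiver.Hom.unop_inj (QuotientGroup.mulActionHom_ext ?_)⟩
    exact (orbRightMul_apply_one G a).trans ha

variable {G F} in
def singleObjToStructuredArrow (Hs : OrbitCat G F) :
    SingleObj Hs.H ⥤ StructuredArrow (Opposite.op Hs) (iFunctor G F hF) where
  obj _ := StructuredArrow.mk (Y := SingleObj.star G)
    (Quiver.Hom.op (show ((⟨⊥, hF⟩ : OrbitCat G F) ⟶ Hs) from
      MulActionHom.quotientMapOfLE bot_le))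
  map {_ _} (h : Hs.H) := StructuredArrow.homMk (h : G) <| by
    refine Quiver.Hom.unop_inj (QuotientGroup.mulActionHom_ext ?_)
    show ((1 * h : G) : G ⧸ Hs.H) = ((1 : G) : G ⧸ Hs.H)
    rw [one_mul, QuotientGroup.eq]
    simp [h.2]
  map_id _ := StructuredArrow.hom_ext _ _ rfl
  map_comp _ _ := StructuredArrow.hom_ext _ _ rfl

instance (Hs : OrbitCat G F) : (singleObjToStructuredArrow hF Hs).Faithful where
  map_injective e := Subtype.ext (congrArg CommaMorphism.right e)

instance (Hs : OrbitCat G F) : (singleObjToStructuredArrow hF Hs).Full where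
  map_surjective {_ _} t := by
    have hw : (MulActionHom.quotientMapOfLE bot_le).comp (orbRightMul G t.right) =
        MulActionHom.quotientMapOfLE (H := ⊥) (K := Hs.H) bot_le :=
      congrArg Quiver.Hom.unop (StructuredArrow.w t)
    have ht : ((1 * t.right : G) : G ⧸ Hs.H) = ((1 : G) : G ⧸ Hs.H) :=
      DFunLike.congr_fun hw ((1 : G) : G ⧸ (⊥ : Subgroup G))
    rw [one_mul, QuotientGroup.eq] at ht
    exact ⟨⟨t.right, by simpa using ht⟩, StructuredArrow.hom_ext _ _ rfl⟩

instance (Hs : OrbitCat G F) : (singleObjToStructuredArrow hF Hs).EssSurj where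
  mem_essImage S := by
    let φ : G ⧸ (⊥ : Subgroup G) →[G] G ⧸ Hs.H := S.hom.unop
    obtain ⟨a, ha⟩ := QuotientGroup.mk_surjective (φ (1 : G))
    refine ⟨SingleObj.star Hs.H, ⟨StructuredArrow.isoMk ?_ ?_⟩⟩
    · exact asIso (a : SingleObj.star G ⟶ SingleObj.star G)
    · refine Quiver.Hom.unop_inj (QuotientGroup.mulActionHom_ext ?_)
      show ((1 * a : G) : G ⧸ Hs.H) = _
      rw [one_mul, ha]
      rfl

instance (Hs : OrbitCat G F) : (singleObjToStructuredArrow hF Hs).IsEquivalence where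

/-- precomposition along `i : G → O_F^op` has a fully faithful right
adjoint `i_*`, given on objects by `(i_* X)(G/H) = X^H`. -/
theorem stmt16 :
    ∃ (istar : ((OrbitCat G F)ᵒᵖ ⥤ C) ⥤ (SingleObj G ⥤ C)),
      istar = (Functor.whiskeringLeft (SingleObj G) (OrbitCat G F)ᵒᵖ C).obj (iFunctor G F hF) ∧
      ∃ (R : (SingleObj G ⥤ C) ⥤ ((OrbitCat G F)ᵒᵖ ⥤ C)) (_ : istar ⊣ R),
        Nonempty R.FullyFaithful ∧
        ∀ (X : SingleObj G ⥤ C) (Hs : OrbitCat G F),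
          Nonempty ((R.obj X).obj (Opposite.op Hs) ≅ (fixPt G C Hs.H).obj X) := by
  -- `fixPt` takes its limits through this instance, so the limit below is `X^H` on the nose
  have : HasLimitsOfSize.{u, 0} C := hasLimitsOfSizeShrink.{u, 0, 0, u} C
  refine ⟨_, rfl, (iFunctor G F hF).ran, (iFunctor G F hF).ranAdjunction C,
    ⟨((iFunctor G F hF).ranAdjunction C).fullyFaithfulROfIsIsoCounit⟩, fun X Hs => ?_⟩
  exact ⟨(iFunctor G F hF).ranObjObjIsoLimit X (Opposite.op Hs) ≪≫
    (Functor.Initial.limitIso (singleObjToStructuredArrow hF Hs) _).symm⟩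
end
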